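/- For every l ≥ 0, the recursively defined matrices U_l (the layerwise gradients of the context entries of the looped Transformer with respect to the row-vector parameter u, evaluated at the TD parameters) satisfy ‖U_l‖_1 ≤ l · (1+γ)², where ‖·‖_1 is the operator norm induced by the ℓ1 vector norm (maximum absolute column sum). -/

import Mathlib

open Matrix Filter Topology

noncomputable section

/-- Index type for `2n` rows (two stacked copies of the feature dimension). -/
abbrev TwoN (n : ℕ) := Fin n ⊕ Fin n
/-- Row index type for prompts: `2n + 1`. -/
abbrev RIdx (n : ℕ) := TwoN n ⊕ Unit
/-- Column index type for prompts: `n + 1` (context columns plus the query column). -/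
abbrev CIdx (n : ℕ) := Fin n ⊕ Unit

/-- The mask `M = [[I_n, 0],[0, 0]]`. -/
def maskM (n : ℕ) : Matrix (CIdx n) (CIdx n) ℝ := Matrix.fromBlocks 1 0 0 0

/-- One linear attention layer `Z ↦ Z + P̃ Z M (Zᵀ Q̃ Z)`. -/
def attnLayer (n : ℕ) (Pm Qm : Matrix (RIdx n) (RIdx n) ℝ)
    (Z : Matrix (RIdx n) (CIdx n) ℝ) : Matrix (RIdx n) (CIdx n) ℝ :=
  Z + Pm * Z * maskM n * (Zᵀ * Qm * Z)

/-- `P̃ = [[0, 0],[u, 1]]`. -/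
def Pmat (n : ℕ) (u : Matrix Unit (TwoN n) ℝ) : Matrix (RIdx n) (RIdx n) ℝ :=
  Matrix.fromBlocks 0 0 u 1

/-- `Q̃ = [[A, 0],[0, 0]]`. -/
def Qmat (n : ℕ) (A : Matrix (TwoN n) (TwoN n) ℝ) : Matrix (RIdx n) (RIdx n) ℝ :=
  Matrix.fromBlocks A 0 0 0

/-- `A^TD = [[-I, I],[0, 0]]`. -/
def Atd (n : ℕ) : Matrix (TwoN n) (TwoN n) ℝ := Matrix.fromBlocks (-1) 1 0 0

/-- A row-stochastic matrix. -/
def RowStochastic {n : ℕ} (P : Matrix (Fin n) (Fin n) ℝ) : Prop :=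
  (∀ i k, 0 ≤ P i k) ∧ ∀ i, ∑ k, P i k = 1

/-- TD iterates `w_0 = 0`, `w_{l+1} = r + γ P w_l`. -/
def tdW {n : ℕ} (γ : ℝ) (P : Matrix (Fin n) (Fin n) ℝ) (r : Fin n → ℝ) : ℕ → Fin n → ℝ
  | 0 => 0
  | l + 1 => r + γ • P.mulVec (tdW γ P r l)

/-- The value vector `v = (I - γ P)⁻¹ r`. -/
def valueV {n : ℕ} (γ : ℝ) (P : Matrix (Fin n) (Fin n) ℝ) (r : Fin n → ℝ) : Fin n → ℝ :=
  ((1 : Matrix (Fin n) (Fin n) ℝ) - γ • P)⁻¹.mulVec r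

/-- The prompt `Z_0(j)`: the `i`-th column is `(e_i, γ Pᵀ e_i, r_i)` and the query
column is `(e_j, 0, 0)`. -/
def prompt {n : ℕ} (γ : ℝ) (P : Matrix (Fin n) (Fin n) ℝ) (r : Fin n → ℝ) (j : Fin n) :
    Matrix (RIdx n) (CIdx n) ℝ := fun p q =>
  match p, q with
  | Sum.inl (Sum.inl k), Sum.inl i => if k = i then 1 else 0
  | Sum.inl (Sum.inr k), Sum.inl i => γ * P i k
  | Sum.inr _, Sum.inl i => r i
  | Sum.inl (Sum.inl k), Sum.inr _ => if k = j then 1 else 0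
  | Sum.inl (Sum.inr _), Sum.inr _ => 0
  | Sum.inr _, Sum.inr _ => 0

/-- Embeddings `Z_l` of the looped transformer with shared parameters `(A, u)`,
starting from the prompt `Z_0(j)`. -/
def embed {n : ℕ} (γ : ℝ) (P : Matrix (Fin n) (Fin n) ℝ) (r : Fin n → ℝ) (j : Fin n)
    (A : Matrix (TwoN n) (TwoN n) ℝ) (u : Matrix Unit (TwoN n) ℝ) :
    ℕ → Matrix (RIdx n) (CIdx n) ℝ
  | 0 => prompt γ P r j
  | l + 1 => attnLayer n (Pmat n u) (Qmat n A) (embed γ P r j A u l)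

/-- Looped `L`-layer transformer output `F_L^{(j)}(A, u) = -(Z_L)_{2n+1, n+1}`. -/
def tfOut {n : ℕ} (γ : ℝ) (P : Matrix (Fin n) (Fin n) ℝ) (r : Fin n → ℝ) (j : Fin n)
    (A : Matrix (TwoN n) (TwoN n) ℝ) (u : Matrix Unit (TwoN n) ℝ) (L : ℕ) : ℝ :=
  -(embed γ P r j A u L (Sum.inr ()) (Sum.inr ()))

/-- `TF_L(Z_0(j); θ_L^TD)`: the transformer output with the TD parameters. -/
def tfTD {n : ℕ} (γ : ℝ) (P : Matrix (Fin n) (Fin n) ℝ) (r : Fin n → ℝ) (j : Fin n) (L : ℕ) : ℝ :=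
  tfOut γ P r j (Atd n) 0 L

/-- `X ∈ ℝ^{2n×n}`: the `i`-th column is `(e_i, γ Pᵀ e_i)`. -/
def Xmat {n : ℕ} (γ : ℝ) (P : Matrix (Fin n) (Fin n) ℝ) : Matrix (TwoN n) (Fin n) ℝ :=
  fun p i => match p with
  | Sum.inl k => if k = i then 1 else 0
  | Sum.inr k => γ * P i k

/-- The query vector `x^q = (e_ω, 0) ∈ ℝ^{2n}`. -/
def xqv {n : ℕ} (ω : Fin n) : TwoN n → ℝ := fun p =>
  match p with
  | Sum.inl k => if k = ω then 1 else 0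
  | Sum.inr _ => 0

/-- Operator norm induced by the ℓ1 vector norm: maximum absolute column sum. -/
def matL1 {m k : Type*} [Fintype m] [Fintype k] (B : Matrix m k ℝ) : ℝ :=
  ⨆ j, ∑ i, |B i j|

/-- `G_0^{(i)} = 0`, `G_{l+1}^{(i)} = X (r - w_l) (X e_i)ᵀ + γ Σ_j P_{ij} G_l^{(j)}`. -/
def Gseq {n : ℕ} (γ : ℝ) (P : Matrix (Fin n) (Fin n) ℝ) (r : Fin n → ℝ) :
    ℕ → Fin n → Matrix (TwoN n) (TwoN n) ℝ
  | 0 => fun _ => 0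
  | l + 1 => fun i =>
      Matrix.vecMulVec ((Xmat γ P).mulVec (r - tdW γ P r l)) ((Xmat γ P).mulVec (Pi.single i 1))
        + γ • ∑ j, P i j • Gseq γ P r l j

/-- `H_0 = 0`, `H_{l+1} = H_l + X (r - w_l) (x^q)ᵀ - G_l^{(ω)}`. -/
def Hseq {n : ℕ} (γ : ℝ) (P : Matrix (Fin n) (Fin n) ℝ) (r : Fin n → ℝ) (ω : Fin n) :
    ℕ → Matrix (TwoN n) (TwoN n) ℝ
  | 0 => 0
  | l + 1 => Hseq γ P r ω l
      + Matrix.vecMulVec ((Xmat γ P).mulVec (r - tdW γ P r l)) (xqv ω)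
      - Gseq γ P r l ω

/-- `U_0 = 0`, `U_{l+1} = X Xᵀ A^TD X + γ U_l Pᵀ`. -/
def Useq {n : ℕ} (γ : ℝ) (P : Matrix (Fin n) (Fin n) ℝ) : ℕ → Matrix (TwoN n) (Fin n) ℝ
  | 0 => 0
  | l + 1 => Xmat γ P * (Xmat γ P)ᵀ * Atd n * Xmat γ P + γ • (Useq γ P l * Pᵀ)

/-- `h_0 = 0`, `h_{l+1} = h_l + X Xᵀ A^TD x^q + U_l Xᵀ A^TD x^q`. -/
def hseq {n : ℕ} (γ : ℝ) (P : Matrix (Fin n) (Fin n) ℝ) (ω : Fin n) : ℕ → TwoN n → ℝ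
  | 0 => 0
  | l + 1 => hseq γ P ω l
      + (Xmat γ P * (Xmat γ P)ᵀ * Atd n).mulVec (xqv ω)
      + (Useq γ P l * (Xmat γ P)ᵀ * Atd n).mulVec (xqv ω)

/-- `g_L(j)`: the vector of all partial derivatives of `F_L^{(j)}` with respect to the
entries of `A` and of `u`, evaluated at the TD parameters `(A^TD, 0)`. -/
def gvec {n : ℕ} (γ : ℝ) (P : Matrix (Fin n) (Fin n) ℝ) (r : Fin n → ℝ) (L : ℕ) (j : Fin n) :
    (TwoN n × TwoN n) ⊕ TwoN n → ℝ
  | Sum.inl ab => deriv (fun t : ℝ =>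
      tfOut γ P r j (Atd n + t • Matrix.single ab.1 ab.2 1) 0 L) 0
  | Sum.inr k => deriv (fun t : ℝ =>
      tfOut γ P r j (Atd n) (t • Matrix.single () k 1) L) 0

/-! Since `X = [I; γ Pᵀ]`, one has `Xᵀ A^TD X = γ Pᵀ - I`, so `U_{l+1} = X (γ Pᵀ - I) + γ U_l Pᵀ`.
The norm `‖B‖_1` is the ℓ∞ operator norm (maximum row sum) of `Bᵀ`, hence submultiplicative, and
`‖X‖_1, ‖γ Pᵀ - I‖_1 ≤ 1 + γ`, `‖Pᵀ‖_1 ≤ 1` give `‖U_{l+1}‖_1 ≤ (1 + γ)² + ‖U_l‖_1`. -/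

attribute [local instance] Matrix.linftyOpNormedAddCommGroup Matrix.linftyOpNormSMulClass

section matL1

variable {l m k : Type*} [Fintype l] [Fintype m] [Fintype k]

theorem sum_abs_le_matL1 (B : Matrix m k ℝ) (j : k) : ∑ i, |B i j| ≤ matL1 B :=
  le_ciSup (f := fun j => ∑ i, |B i j|) (Finite.bddAbove_range _) j

theorem matL1_le {B : Matrix m k ℝ} {c : ℝ} (h : ∀ j, ∑ i, |B i j| ≤ c) (hc : 0 ≤ c) :
    matL1 B ≤ c :=
  Real.iSup_le h hc

theorem matL1_nonneg (B : Matrix m k ℝ) : 0 ≤ matL1 B :=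
  Real.iSup_nonneg fun _ => Finset.sum_nonneg fun _ _ => abs_nonneg _

theorem matL1_eq_norm_transpose (B : Matrix m k ℝ) : matL1 B = ‖Bᵀ‖ := by
  have h_row : ∀ j, ‖WithLp.toLp 1 (Bᵀ j)‖ = ∑ i, |B i j| := fun j => by
    simp [PiLp.norm_eq_of_L1]
  refine le_antisymm (matL1_le (fun j => ?_) (norm_nonneg _)) ?_
  · exact (h_row j).symm.trans_le (norm_le_pi_norm (fun j => WithLp.toLp 1 (Bᵀ j)) j)
  · exact (pi_norm_le_iff_of_nonneg (matL1_nonneg B)).2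
      fun j => (h_row j).trans_le (sum_abs_le_matL1 B j)

theorem matL1_mul_le (A : Matrix l m ℝ) (B : Matrix m k ℝ) :
    matL1 (A * B) ≤ matL1 A * matL1 B := by
  simp only [matL1_eq_norm_transpose, transpose_mul, mul_comm ‖Aᵀ‖]
  exact linfty_opNorm_mul _ _

theorem matL1_add_le (A B : Matrix m k ℝ) : matL1 (A + B) ≤ matL1 A + matL1 B := by
  simp only [matL1_eq_norm_transpose, transpose_add]
  exact norm_add_le _ _

theorem matL1_sub_le (A B : Matrix m k ℝ) : matL1 (A - B) ≤ matL1 A + matL1 B := by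
  simp only [matL1_eq_norm_transpose, transpose_sub]
  exact norm_sub_le _ _

theorem matL1_smul (c : ℝ) (B : Matrix m k ℝ) : matL1 (c • B) = |c| * matL1 B := by
  simp only [matL1_eq_norm_transpose, transpose_smul, norm_smul, Real.norm_eq_abs]

theorem matL1_one_le [DecidableEq m] : matL1 (1 : Matrix m m ℝ) ≤ 1 := by
  rw [matL1_eq_norm_transpose, transpose_one, ← diagonal_one, linfty_opNorm_diagonal]
  exact pi_norm_const_le 1 |>.trans_eq norm_one

theorem matL1_fromRows_le (A : Matrix l k ℝ) (B : Matrix m k ℝ) :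
    matL1 (fromRows A B) ≤ matL1 A + matL1 B :=
  matL1_le (fun j => by
      simpa only [Fintype.sum_sum_type, fromRows_apply_inl, fromRows_apply_inr] using
        add_le_add (sum_abs_le_matL1 A j) (sum_abs_le_matL1 B j))
    (add_nonneg (matL1_nonneg A) (matL1_nonneg B))

end matL1

theorem RowStochastic.matL1_transpose_le_one {n : ℕ} {P : Matrix (Fin n) (Fin n) ℝ}
    (hP : RowStochastic P) : matL1 Pᵀ ≤ 1 :=
  matL1_le (fun j => by simp [abs_of_nonneg (hP.1 j _), hP.2 j]) zero_le_one

section Xmat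

variable {n : ℕ} {γ : ℝ} {P : Matrix (Fin n) (Fin n) ℝ}

variable (γ P) in
theorem Xmat_eq_fromRows : Xmat γ P = fromRows 1 (γ • Pᵀ) := by
  ext (k | k) i <;> simp [Xmat, one_apply]

variable (γ P) in
theorem Xmat_transpose_mul_Atd_mul_Xmat : (Xmat γ P)ᵀ * Atd n * Xmat γ P = γ • Pᵀ - 1 := by
  rw [Xmat_eq_fromRows, transpose_fromRows, Atd, fromCols_mul_fromBlocks, fromCols_mul_fromRows]
  simp [neg_add_eq_sub]

theorem matL1_smul_transpose_sub_one_le (hγ : 0 ≤ γ) (hP : matL1 Pᵀ ≤ 1) :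
    matL1 (γ • Pᵀ - 1) ≤ 1 + γ := by
  calc matL1 (γ • Pᵀ - 1) ≤ |γ| * matL1 Pᵀ + matL1 (1 : Matrix (Fin n) (Fin n) ℝ) := by
        simpa only [matL1_smul] using matL1_sub_le (γ • Pᵀ) 1
    _ ≤ γ * 1 + 1 := by rw [abs_of_nonneg hγ]; gcongr; exact matL1_one_le
    _ = 1 + γ := by ring

theorem matL1_Xmat_le (hγ : 0 ≤ γ) (hP : matL1 Pᵀ ≤ 1) : matL1 (Xmat γ P) ≤ 1 + γ := by
  calc matL1 (Xmat γ P) ≤ matL1 (1 : Matrix (Fin n) (Fin n) ℝ) + |γ| * matL1 Pᵀ := by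
        simpa only [Xmat_eq_fromRows, matL1_smul] using matL1_fromRows_le 1 (γ • Pᵀ)
    _ ≤ 1 + γ * 1 := by rw [abs_of_nonneg hγ]; gcongr; exact matL1_one_le
    _ = 1 + γ := by ring

theorem matL1_Useq_succ_le (hγ : 0 ≤ γ) (hP : matL1 Pᵀ ≤ 1) (l : ℕ) :
    matL1 (Useq γ P (l + 1)) ≤ (1 + γ) ^ 2 + γ * matL1 (Useq γ P l) := by
  have h_head : matL1 (Xmat γ P * (Xmat γ P)ᵀ * Atd n * Xmat γ P) ≤ (1 + γ) ^ 2 := by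
    rw [Matrix.mul_assoc, Matrix.mul_assoc, ← Matrix.mul_assoc (Xmat γ P)ᵀ,
      Xmat_transpose_mul_Atd_mul_Xmat, sq]
    exact (matL1_mul_le _ _).trans (mul_le_mul (matL1_Xmat_le hγ hP)
      (matL1_smul_transpose_sub_one_le hγ hP) (matL1_nonneg _) (by linarith))
  have h_tail : matL1 (γ • (Useq γ P l * Pᵀ)) ≤ γ * matL1 (Useq γ P l) := by
    rw [matL1_smul, abs_of_nonneg hγ]
    gcongr
    simpa using (matL1_mul_le (Useq γ P l) Pᵀ).trans
      (mul_le_mul_of_nonneg_left hP (matL1_nonneg _))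
  exact (matL1_add_le _ _).trans (add_le_add h_head h_tail)

end Xmat

theorem stmt12_general (n : ℕ) (γ : ℝ) (hγ0 : 0 ≤ γ) (hγ1 : γ < 1)
    (P : Matrix (Fin n) (Fin n) ℝ) (hP : RowStochastic P)
    (l : ℕ) :
    matL1 (Useq γ P l) ≤ (l : ℝ) * (1 + γ) ^ 2 := by
  induction l with
  | zero => simp [Useq, matL1]
  | succ l ih =>
    calc matL1 (Useq γ P (l + 1))
        ≤ (1 + γ) ^ 2 + γ * matL1 (Useq γ P l) :=
          matL1_Useq_succ_le hγ0 hP.matL1_transpose_le_one l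
      _ ≤ (1 + γ) ^ 2 + 1 * (l * (1 + γ) ^ 2) := by
          gcongr
          exact matL1_nonneg _
      _ = ((l + 1 : ℕ) : ℝ) * (1 + γ) ^ 2 := by push_cast; ring

/-- `‖U_l‖_1 ≤ l (1+γ)²`. -/
theorem stmt12 (n : ℕ) (hn : 1 ≤ n) (γ : ℝ) (hγ0 : 0 ≤ γ) (hγ1 : γ < 1)
    (P : Matrix (Fin n) (Fin n) ℝ) (hP : RowStochastic P) (r : Fin n → ℝ)
    (l : ℕ) :
    matL1 (Useq γ P l) ≤ (l : ℝ) * (1 + γ) ^ 2 :=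
  stmt12_general n γ hγ0 hγ1 P hP l

end
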